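/- If J : ℝⁿ → ℝ is differentiable with ξ-Lipschitz gradient and bounded below by J(u★), then for gradient descent with step 1/ξ starting from u⁰, the sum ∑_{ℓ=0}^{∞} ‖∇J(u_ℓ)‖² is at most 2ξ·(J(u⁰) - J(u★)). -/

import Mathlib

/-!
Descent lemma: if `∇f` is `L`-Lipschitz, then `t ↦ f (x + t • v) - t ⟪∇f x, v⟫ - L t² ‖v‖² / 2` has
nonpositive derivative for `t ≥ 0`, so `f (x + v) ≤ f x + ⟪∇f x, v⟫ + L ‖v‖² / 2`. A gradient step
of size `1 / ξ` therefore lowers `J` by at least `‖∇J‖² / (2ξ)`, and these decreases telescope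
against the lower bound `J u★`.
-/

open Set InnerProductSpace

section

variable {E : Type*} [NormedAddCommGroup E] [InnerProductSpace ℝ E] [CompleteSpace E]
  {f : E → ℝ} {f' : E → E} {L : ℝ}

lemma HasGradientAt.hasDerivAt_comp_add_smul {x v g : E} {t : ℝ}
    (hf : HasGradientAt f g (x + t • v)) :
    HasDerivAt (fun s : ℝ ↦ f (x + s • v)) (inner ℝ g v) t := by
  have hline : HasDerivAt (fun s : ℝ ↦ x + s • v) v t := by
    simpa using ((hasDerivAt_id t).smul_const v).const_add x
  simpa [Function.comp_def, toDual_apply_apply] using hf.hasFDerivAt.comp_hasDerivAt t hline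

lemma image_add_le_of_lipschitz_gradient (hf : ∀ x, HasGradientAt f (f' x) x)
    (hL : ∀ x y, ‖f' x - f' y‖ ≤ L * ‖x - y‖) (x v : E) :
    f (x + v) ≤ f x + inner ℝ (f' x) v + L / 2 * ‖v‖ ^ 2 := by
  set g : ℝ → ℝ := fun t ↦ f (x + t • v) - t * inner ℝ (f' x) v - L / 2 * t ^ 2 * ‖v‖ ^ 2
  have hg : ∀ t, HasDerivAt g
      (inner ℝ (f' (x + t • v)) v - inner ℝ (f' x) v - L * t * ‖v‖ ^ 2) t := by
    intro t
    have := ((hf (x + t • v)).hasDerivAt_comp_add_smul.fun_sub ((hasDerivAt_id' t).mul_const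
      (inner ℝ (f' x) v))).fun_sub (((hasDerivAt_pow 2 t).const_mul (L / 2)).mul_const (‖v‖ ^ 2))
    exact this.congr_deriv (by simp only [Nat.cast_ofNat, one_mul]; ring)
  have hg_nonpos : ∀ t ∈ interior (Ici (0 : ℝ)),
      inner ℝ (f' (x + t • v)) v - inner ℝ (f' x) v - L * t * ‖v‖ ^ 2 ≤ 0 := by
    intro t ht
    rw [interior_Ici, mem_Ioi] at ht
    have hdiff : ‖f' (x + t • v) - f' x‖ ≤ L * (t * ‖v‖) := by
      simpa [norm_smul, abs_of_pos ht] using hL (x + t • v) x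
    calc inner ℝ (f' (x + t • v)) v - inner ℝ (f' x) v - L * t * ‖v‖ ^ 2
        = inner ℝ (f' (x + t • v) - f' x) v - L * t * ‖v‖ ^ 2 := by rw [inner_sub_left]
      _ ≤ ‖f' (x + t • v) - f' x‖ * ‖v‖ - L * t * ‖v‖ ^ 2 := by
        gcongr; exact real_inner_le_norm _ _
      _ ≤ L * (t * ‖v‖) * ‖v‖ - L * t * ‖v‖ ^ 2 := by gcongr
      _ = 0 := by ring
  have hanti : AntitoneOn g (Ici 0) :=
    antitoneOn_of_hasDerivWithinAt_nonpos (convex_Ici 0)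
      (fun t _ ↦ (hg t).continuousAt.continuousWithinAt)
      (fun t _ ↦ (hg t).hasDerivWithinAt) hg_nonpos
  have hg10 := hanti (mem_Ici.2 le_rfl) (mem_Ici.2 zero_le_one) zero_le_one
  simp only [g, zero_smul, add_zero, one_smul] at hg10
  linarith

lemma image_sub_smul_le_of_lipschitz_gradient (hf : ∀ x, HasGradientAt f (f' x) x)
    (hL : ∀ x y, ‖f' x - f' y‖ ≤ L * ‖x - y‖) (x : E) (η : ℝ) :
    f (x - η • f' x) ≤ f x - η * (1 - L * η / 2) * ‖f' x‖ ^ 2 := by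
  have hdescent := image_add_le_of_lipschitz_gradient hf hL x (-(η • f' x))
  rw [inner_neg_right, real_inner_smul_right, real_inner_self_eq_norm_sq, norm_neg, norm_smul,
    Real.norm_eq_abs, mul_pow, sq_abs, ← sub_eq_add_neg] at hdescent
  linarith

end

lemma tsum_le_sub_of_le_sub_succ {b a : ℕ → ℝ} {m : ℝ} (hb : ∀ k, 0 ≤ b k)
    (hba : ∀ k, b k ≤ a k - a (k + 1)) (hm : ∀ k, m ≤ a k) : ∑' k, b k ≤ a 0 - m := by
  refine Real.tsum_le_of_sum_range_le hb fun N ↦ ?_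
  calc ∑ k ∈ Finset.range N, b k ≤ ∑ k ∈ Finset.range N, (a k - a (k + 1)) :=
        Finset.sum_le_sum fun k _ ↦ hba k
    _ = a 0 - a N := Finset.sum_range_sub' a N
    _ ≤ a 0 - m := by linarith [hm N]

theorem gradient_descent_sum_sq_grad_bound {n : ℕ} (J : EuclideanSpace ℝ (Fin n) → ℝ)
    (ξ : ℝ) (hξ : 0 < ξ) (hJ : Differentiable ℝ J)
    (hLip : ∀ x y, ‖gradient J x - gradient J y‖ ≤ ξ * ‖x - y‖)
    (ustar : EuclideanSpace ℝ (Fin n)) (hbdd : ∀ u, J ustar ≤ J u)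
    (u : ℕ → EuclideanSpace ℝ (Fin n))
    (hu : ∀ k, u (k + 1) = u k - (1 / ξ) • gradient J (u k)) :
    ∑' ℓ : ℕ, ‖gradient J (u ℓ)‖ ^ 2 ≤ 2 * ξ * (J (u 0) - J ustar) := by
  have hstep : ∀ k, ‖gradient J (u k)‖ ^ 2 ≤ 2 * ξ * J (u k) - 2 * ξ * J (u (k + 1)) := by
    intro k
    have hdescent :=
      image_sub_smul_le_of_lipschitz_gradient (fun x ↦ (hJ x).hasGradientAt) hLip (u k) (1 / ξ)
    rw [← hu k] at hdescent
    field_simp at hdescent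
    linarith
  calc ∑' ℓ, ‖gradient J (u ℓ)‖ ^ 2 ≤ 2 * ξ * J (u 0) - 2 * ξ * J ustar :=
        tsum_le_sub_of_le_sub_succ (fun _ ↦ sq_nonneg _) hstep
          fun k ↦ mul_le_mul_of_nonneg_left (hbdd (u k)) (by positivity)
    _ = 2 * ξ * (J (u 0) - J ustar) := by ring
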